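/- For every k ≥ 4, q ≥ 2, and n ≥ 2, N_k(q,n) ≥ 2^{N_{k-1}(q,n)/N_{k-2}(q,n)}. -/

import Mathlib

/-!
Write `T₀ = [n]^q` and let `T_{m+1}` be the poset of lower sets of `T_m`; then
`N_{m+2}(q,n) = |T_m| + 1`.

If a colouring of `[N]` has no monochromatic monotone path of length `n`, label each increasing
`(m+1)`-tuple `u` by the vector, indexed by colours, of the lengths of the longest monochromatic
paths ending at `u`: the label of the last `m+1` entries of an increasing `(m+2)`-tuple is never
below the label of its first `m+1` entries. Relabelling a tuple by the lower closure of the labels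
of its increasing extensions to the left preserves this property while shortening the tuples by
one and climbing one step of the tower; after `m` steps the points of `[N]` are labelled
injectively in `T_m`.

Conversely, call a path in a poset rising if no point is below its predecessor. Colouring a
`(k+1)`-tuple of lower sets through points of `Y \ X` for its consecutive pairs `(X, Y)` turns a
colouring of `k`-tuples of `T` without monochromatic rising paths into one of `L(T)`, and a linear
extension of `T_m` transfers such a colouring to `[|T_m|]`.

Lower sets of `P` of equal cardinality form an antichain of `L(P)`, and the `2^s` subsets of an
antichain of size `s` generate distinct lower sets of `L(P)`. Distributing the `|L(P)| - 1`
nonempty lower sets over the `|P|` nonempty levels gives a level with `s ≥ (|L(P)| - 1)/|P|`,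
which yields `|L(L(P))| + 1 ≥ 2^{(|L(P)| + 1)/(|P| + 1)}`.
-/

/-- Monochromatic monotone path of length `n` in a `q`-coloring of the `k`-subsets. -/
def HasMonoPathK (k : ℕ) {N q : ℕ} (n : ℕ) (c : (Fin k → Fin N) → Fin q) : Prop :=
  ∃ x : Fin (n + k - 1) → Fin N, StrictMono x ∧ ∃ col : Fin q,
    ∀ i : ℕ, ∀ _ : i < n,
      c (fun j => x ⟨i + j.1, by have := j.2; omega⟩) = col

/-- `N_k(q,n)`: the least `N` such that every `q`-coloring of the `k`-subsets of
`{1,…,N}` contains a monochromatic monotone path of length `n`. -/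
noncomputable def Nk (k q n : ℕ) : ℕ :=
  sInf {N : ℕ | ∀ c : (Fin k → Fin N) → Fin q, HasMonoPathK k n c}

open Set

def IsMonoPath {α : Type*} {k q : ℕ} (c : (Fin k → α) → Fin q) (col : Fin q) (n : ℕ)
    (y : ℕ → α) : Prop :=
  ∀ i < n, c (fun a => y (i + a)) = col

theorem hasMonoPathK_of_strictMonoOn {k q N n : ℕ} {c : (Fin k → Fin N) → Fin q} {col : Fin q}
    {y : ℕ → Fin N} (hy : StrictMonoOn y (Iio (n + k - 1))) (hc : IsMonoPath c col n y) :
    HasMonoPathK k n c :=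
  ⟨fun i => y i, fun i j hij => hy i.2 j.2 hij, col, hc⟩

-- `downsetTower q n m` is the paper's `P^{m+2}_q[n]`.
def downsetTower (q n : ℕ) : ℕ → PartOrd
  | 0 => .of (Fin q → Fin n)
  | m + 1 => .of (LowerSet (downsetTower q n m))

namespace downsetTower

variable {q n : ℕ}

instance instFinite : ∀ m, Finite (downsetTower q n m)
  | 0 => inferInstanceAs (Finite (Fin q → Fin n))
  | m + 1 => have := instFinite m
      inferInstanceAs (Finite (LowerSet (downsetTower q n m)))

theorem nonempty (hn : 0 < n) : ∀ m, Nonempty (downsetTower q n m)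
  | 0 => ⟨fun _ => ⟨0, hn⟩⟩
  | m + 1 => ⟨(⊥ : LowerSet (downsetTower q n m))⟩

end downsetTower

section LowerBound

variable {α : Type*} {k q n : ℕ}

def IsRising [LE α] (m : ℕ) (y : ℕ → α) : Prop :=
  ∀ i, i + 1 < m → ¬ y (i + 1) ≤ y i

def RisingPathFree [LE α] (c : (Fin k → α) → Fin q) (n : ℕ) : Prop :=
  ∀ col y, IsRising (n + k - 1) y → ¬ IsMonoPath c col n y

theorem exists_risingPathFree_two (hq : 0 < q) :
    ∃ c : (Fin 2 → (Fin q → Fin n)) → Fin q, RisingPathFree c n := by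
  have : Nonempty (Fin q) := ⟨⟨0, hq⟩⟩
  -- Colour a pair by a coordinate in which it increases: along a monochromatic rising path of
  -- colour `col`, coordinate `col` would increase `n` times inside `Fin n`.
  refine ⟨fun v => Classical.epsilon fun j => v 0 j < v 1 j, fun col y hy hc => ?_⟩
  have step : ∀ i < n, y i col < y (i + 1) col := by
    intro i hi
    have hlt : ∃ j, y i j < y (i + 1) j := by
      simpa [Pi.le_def] using hy i (by omega)
    simpa [← hc i hi] using Classical.epsilon_spec hlt
  have grow : ∀ i ≤ n, i ≤ (y i col : ℕ) := by
    intro i hi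
    induction i with
    | zero => exact Nat.zero_le _
    | succ i ih => exact (ih (by omega)).trans_lt (step i (by omega))
  exact absurd (grow n le_rfl) (by have := (y n col).2; omega)

noncomputable def LowerSet.newPoint [LE α] [Nonempty α] (X Y : LowerSet α) : α :=
  Classical.epsilon fun a => a ∈ Y ∧ a ∉ X

theorem LowerSet.newPoint_spec [LE α] [Nonempty α] {X Y : LowerSet α} (h : ¬ Y ≤ X) :
    X.newPoint Y ∈ Y ∧ X.newPoint Y ∉ X :=
  Classical.epsilon_spec (Set.not_subset.mp h)

theorem RisingPathFree.lowerSet [LE α] [Nonempty α] {c : (Fin k → α) → Fin q}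
    (hc : RisingPathFree c n) :
    RisingPathFree (fun A : Fin (k + 1) → LowerSet α =>
      c fun j => (A j.castSucc).newPoint (A j.succ)) n := by
  intro col B hB hcB
  refine hc col (fun i => (B i).newPoint (B (i + 1))) (fun i hi hle => ?_) hcB
  have hi := LowerSet.newPoint_spec (hB i (by omega))
  have hi' := LowerSet.newPoint_spec (hB (i + 1) (by omega))
  -- a point below the previous one would lie in the lower set `B (i + 1)` it was chosen outside
  exact hi'.2 ((B (i + 1)).lower hle hi.1)

end LowerBound

theorem downsetTower.exists_risingPathFree {q n : ℕ} (hq : 0 < q) (hn : 0 < n) :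
    ∀ m, ∃ c : (Fin (m + 2) → downsetTower q n m) → Fin q, RisingPathFree c n
  | 0 => exists_risingPathFree_two hq
  | m + 1 =>
    have := nonempty (q := q) hn m
    let ⟨_, hc⟩ := exists_risingPathFree hq hn m
    ⟨_, hc.lowerSet⟩

theorem exists_fin_not_le_of_lt (α : Type*) [PartialOrder α] [Finite α] :
    ∃ e : Fin (Nat.card α) → α, ∀ ⦃a b⦄, a < b → ¬ e b ≤ e a := by
  have : Fintype (LinearExtension α) := Fintype.ofFinite α
  let iso := monoEquivOfFin (LinearExtension α)
    (Nat.card_eq_fintype_card (α := LinearExtension α)).symm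
  let e : Fin (Nat.card α) → α := fun a => iso a
  refine ⟨e, fun a b hab hle => ?_⟩
  have hle' : toLinearExtension (α := α) (e b) ≤ toLinearExtension (e a) :=
    toLinearExtension.monotone hle
  exact (iso.strictMono hab).not_ge hle'

theorem not_hasMonoPathK_comp {β : Type*} [LE β] [Nonempty β] {k q n N : ℕ}
    {c : (Fin k → β) → Fin q} (hc : RisingPathFree c n) {e : Fin N → β}
    (he : ∀ ⦃a b⦄, a < b → ¬ e b ≤ e a) : ¬ HasMonoPathK k n fun v => c (e ∘ v) := by
  rintro ⟨x, hx, col, hcol⟩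
  let y : ℕ → β := fun i =>
    if h : i < n + k - 1 then e (x ⟨i, h⟩) else Classical.arbitrary β
  refine hc col y (fun i hi => ?_) (fun i hi => ?_)
  · have hlt : x ⟨i, by omega⟩ < x ⟨i + 1, hi⟩ := hx (Fin.mk_lt_mk.mpr i.lt_succ_self)
    simpa [y, hi, show i < n + k - 1 by omega] using he hlt
  · convert hcol i hi using 2
    ext a
    simp [y, show i + a < n + k - 1 by omega]

theorem exists_not_hasMonoPathK {q n m N : ℕ} (hq : 0 < q) (hn : 0 < n)
    (hN : N ≤ Nat.card (downsetTower q n m)) :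
    ∃ c : (Fin (m + 2) → Fin N) → Fin q, ¬ HasMonoPathK (m + 2) n c := by
  have := downsetTower.nonempty (q := q) hn m
  obtain ⟨c, hc⟩ := downsetTower.exists_risingPathFree hq hn m
  obtain ⟨e, he⟩ := exists_fin_not_le_of_lt (downsetTower q n m)
  exact ⟨_, not_hasMonoPathK_comp hc (e := e ∘ Fin.castLE hN) fun a b hab => he hab⟩

theorem Fin.init_cons_zero_of_tail_eq {n : ℕ} {γ : Type*} {x : Fin (n + 1) → γ}
    {w : Fin (n + 1) → γ} (h : Fin.tail x = Fin.init w) :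
    Fin.init (Fin.cons (x 0) w : Fin (n + 2) → γ) = x := by
  ext i
  refine Fin.cases rfl (fun j => ?_) i
  simpa [Fin.init, Fin.tail, ← Fin.succ_castSucc] using (congrFun h j).symm

section ShiftLabeling

variable {α β : Type*} [Preorder β] {t : ℕ}

def IsShiftLabeling [Preorder α] (g : (Fin t → α) → β) : Prop :=
  ∀ w : Fin (t + 1) → α, StrictMono w → ¬ g (Fin.tail w) ≤ g (Fin.init w)

theorem IsShiftLabeling.lowerClosure [Preorder α] {g : (Fin (t + 2) → α) → β}
    (hg : IsShiftLabeling g) :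
    IsShiftLabeling fun u : Fin (t + 1) → α =>
      lowerClosure (g '' {x | StrictMono x ∧ Fin.tail x = u}) := by
  intro w hw hle
  -- `g w` lies below `g x` for an increasing `x` with `Fin.tail x = Fin.init w`, and then the
  -- increasing tuple `Fin.cons (x 0) w` violates `hg`.
  obtain ⟨_, ⟨x, ⟨hx, hxw⟩, rfl⟩, hwx⟩ :=
    hle (subset_lowerClosure ⟨w, ⟨hw, rfl⟩, rfl⟩)
  have hxw0 : x 0 < w 0 := by
    simpa [Fin.tail, Fin.init] using hx (Fin.zero_lt_one : (0 : Fin (t + 2)) < 1) |>.trans_eq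
      (congrFun hxw 0)
  refine hg (Fin.cons (x 0) w) (hw.vecCons hxw0) ?_
  rwa [Fin.tail_cons, Fin.init_cons_zero_of_tail_eq hxw]

theorem IsShiftLabeling.card_le [LinearOrder α] [Finite β] {g : (Fin 1 → α) → β}
    (hg : IsShiftLabeling g) : Nat.card α ≤ Nat.card β := by
  have hne : ∀ a b : α, a < b → g ![a] ≠ g ![b] := by
    intro a b hab heq
    have hinit : Fin.init ![a, b] = ![a] := by
      ext i
      fin_cases i
      rfl
    exact hg ![a, b] (by simpa using hab) (by rw [hinit, heq]; rfl)
  exact Nat.card_le_card_of_injective _ (Function.Injective.of_lt_imp_ne hne)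

end ShiftLabeling

section PathLengths

variable {α : Type*} [Preorder α] {q t : ℕ} {c : (Fin (t + 2) → α) → Fin q}

def EndsMonoPath (c : (Fin (t + 2) → α) → Fin q) (col : Fin q) (L : ℕ)
    (u : Fin (t + 1) → α) : Prop :=
  ∃ y : ℕ → α, StrictMonoOn y (Iio (L + t + 1)) ∧ IsMonoPath c col L y ∧
    (fun a : Fin (t + 1) => y (L + a)) = u

theorem endsMonoPath_zero {col : Fin q} {u : Fin (t + 1) → α} (hu : StrictMono u) :
    EndsMonoPath c col 0 u := by
  refine ⟨fun i => u ⟨min i t, by omega⟩, fun i hi j hj hij => hu ?_, nofun, ?_⟩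
  · simp only [mem_Iio] at hi hj
    simp only [Fin.mk_lt_mk]
    omega
  · funext a
    exact congrArg u (Fin.ext (by simp; omega))

theorem EndsMonoPath.snoc {L : ℕ} {w : Fin (t + 2) → α}
    (h : EndsMonoPath c (c w) L (Fin.init w)) (hw : StrictMono w) :
    EndsMonoPath c (c w) (L + 1) (Fin.tail w) := by
  obtain ⟨y, hy, hmono, hend⟩ := h
  have hyw : ∀ a : Fin (t + 1), y (L + a) = w a.castSucc := fun a => congrFun hend a
  let y' : ℕ → α := fun i => if i < L + t + 1 then y i else w (Fin.last _)
  have hy'_lt : ∀ i < L + t + 1, y' i = y i := fun i hi => if_pos hi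
  have hy'_last : y' (L + t + 1) = w (Fin.last _) := if_neg (lt_irrefl _)
  have hwin : (fun a : Fin (t + 2) => y' (L + a)) = w := by
    funext a
    induction a using Fin.lastCases with
    | last => exact hy'_last
    | cast a => rw [hy'_lt _ (by simp; omega)]; exact hyw a
  refine ⟨y', fun i hi j hj hij => ?_, fun i hi => ?_, ?_⟩
  · simp only [mem_Iio] at hi hj
    rw [hy'_lt i (by omega)]
    by_cases hj' : j < L + t + 1
    · rw [hy'_lt j hj']
      exact hy (by simpa using (by omega : i < L + t + 1)) hj' hij
    · obtain rfl : j = L + t + 1 := by omega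
      rw [hy'_last]
      calc y i ≤ y (L + t) := hy.monotoneOn (by simp; omega) (by simp) (by omega)
        _ = w (Fin.last t).castSucc := hyw (Fin.last t)
        _ < w (Fin.last _) := hw (Fin.castSucc_lt_last _)
  · rcases (Nat.lt_succ_iff.mp hi).lt_or_eq with hi | rfl
    · rw [← hmono i hi]
      congr 1
      funext a
      exact hy'_lt _ (by omega)
    · exact congrArg c hwin
  · funext a
    rw [Fin.tail, ← congrFun hwin a.succ]
    congr 1
    simp only [Fin.val_succ]
    omega

theorem EndsMonoPath.exists_isMonoPath {col : Fin q} {L n : ℕ} {u : Fin (t + 1) → α}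
    (h : EndsMonoPath c col L u) (hnL : n ≤ L) :
    ∃ y : ℕ → α, StrictMonoOn y (Iio (n + t + 1)) ∧ IsMonoPath c col n y :=
  let ⟨y, hy, hmono, _⟩ := h
  ⟨y, hy.mono (Iio_subset_Iio (by omega)), fun i hi => hmono i (by omega)⟩

open Classical in
noncomputable def pathLengths (c : (Fin (t + 2) → α) → Fin q) (n : ℕ)
    (u : Fin (t + 1) → α) : Fin q → Fin (n + 1) :=
  fun col => ⟨Nat.findGreatest (fun L => EndsMonoPath c col L u) n,
    Nat.lt_succ_of_le (Nat.findGreatest_le n)⟩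

theorem isShiftLabeling_pathLengths {n : ℕ}
    (hc : ∀ col y, StrictMonoOn y (Iio (n + 1 + t + 1)) → ¬ IsMonoPath c col (n + 1) y) :
    IsShiftLabeling (pathLengths c n) := by
  classical
  intro w hw hle
  have hinit : EndsMonoPath c (c w) (pathLengths c n (Fin.init w) (c w)) (Fin.init w) :=
    Nat.findGreatest_spec (P := fun L => EndsMonoPath c (c w) L (Fin.init w)) (Nat.zero_le n)
      (endsMonoPath_zero (hw.comp Fin.strictMono_castSucc))
  have htail := hinit.snoc hw
  have hlt : (pathLengths c n (Fin.init w) (c w) : ℕ) + 1 ≤ n := by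
    by_contra! hn
    obtain ⟨y, hy, hmono⟩ := htail.exists_isMonoPath hn
    exact hc _ y hy hmono
  have hge := Nat.le_findGreatest (P := fun L => EndsMonoPath c (c w) L (Fin.tail w)) hlt htail
  exact absurd (hle (c w)) (Fin.not_le.mpr (Nat.lt_of_succ_le hge))

end PathLengths

theorem downsetTower.exists_isShiftLabeling {q n : ℕ} {α : Type*} [Preorder α] :
    ∀ m t, (∃ g : (Fin (m + t + 1) → α) → downsetTower q n 0, IsShiftLabeling g) →
      ∃ g : (Fin (t + 1) → α) → downsetTower q n m, IsShiftLabeling g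
  | 0, t, h => by rwa [Nat.zero_add] at h
  | m + 1, t, h => by
    rw [show m + 1 + t + 1 = m + (t + 1) + 1 by omega] at h
    obtain ⟨g, hg⟩ := downsetTower.exists_isShiftLabeling m (t + 1) h
    exact ⟨_, hg.lowerClosure⟩

theorem card_le_of_not_hasMonoPathK {q n m N : ℕ} {c : (Fin (m + 2) → Fin N) → Fin q}
    (hc : ¬ HasMonoPathK (m + 2) (n + 1) c) : N ≤ Nat.card (downsetTower q (n + 1) m) := by
  have hbase : IsShiftLabeling (pathLengths c n) :=
    isShiftLabeling_pathLengths fun _ _ hy hmono => hc (hasMonoPathK_of_strictMonoOn hy hmono)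
  obtain ⟨g, hg⟩ := downsetTower.exists_isShiftLabeling m 0 ⟨_, hbase⟩
  simpa using hg.card_le

theorem Nk_eq {m q n : ℕ} (hq : 0 < q) (hn : 0 < n) :
    Nk (m + 2) q n = Nat.card (downsetTower q n m) + 1 := by
  obtain ⟨n, rfl⟩ : ∃ n', n = n' + 1 := ⟨n - 1, by omega⟩
  refine IsLeast.csInf_eq ⟨fun c => ?_, fun N hN => ?_⟩
  · by_contra h
    have := card_le_of_not_hasMonoPathK h
    omega
  · by_contra! hlt
    obtain ⟨c, hc⟩ := exists_not_hasMonoPathK hq hn (Nat.lt_succ_iff.mp hlt)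
    exact hc (hN c)

theorem LowerSet.isAntichain_ncard_eq {α : Type*} [LE α] [Finite α] (i : ℕ) :
    IsAntichain (· ≤ ·) {X : LowerSet α | (X : Set α).ncard = i} := fun _ hX _ hY hne hle =>
  hne (SetLike.coe_injective (Set.eq_of_subset_of_ncard_le (LowerSet.coe_subset_coe.2 hle)
    (hY.trans hX.symm).le (Set.toFinite _)))

theorem exists_card_lowerSet_le_one_add_mul {α : Type*} [LE α] [Finite α] :
    ∃ i, Nat.card (LowerSet α) ≤
      1 + Nat.card α * {X : LowerSet α | (X : Set α).ncard = i}.ncard := by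
  classical
  have := Fintype.ofFinite (LowerSet α)
  let level (i : ℕ) := Finset.univ.filter fun X : LowerSet α => (X : Set α).ncard = i
  have hlevel : ∀ i, {X : LowerSet α | (X : Set α).ncard = i}.ncard = (level i).card := by
    intro i
    rw [← Set.ncard_coe_finset]
    simp [level]
  have hsum :
      Nat.card (LowerSet α) = ∑ i ∈ Finset.range (Nat.card α + 1), (level i).card := by
    rw [Nat.card_eq_fintype_card, ← Finset.card_univ]
    exact Finset.card_eq_sum_card_fiberwise fun X _ =>
      Finset.mem_range.mpr (Nat.lt_succ_of_le (Set.ncard_le_card _))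
  have hzero : (level 0).card ≤ 1 := by
    refine Finset.card_le_one.mpr fun _ hX _ hY => SetLike.coe_injective ?_
    simp only [level, Finset.mem_filter, Set.ncard_eq_zero (Set.toFinite _)] at hX hY
    rw [hX.2, hY.2]
  obtain ⟨i, -, hi⟩ :=
    (Finset.range (Nat.card α + 1)).exists_max_image (fun j => (level j).card) ⟨0, by simp⟩
  have hrest : ∑ j ∈ Finset.range (Nat.card α), (level (j + 1)).card ≤
      Nat.card α * (level i).card := by
    have := Finset.sum_le_card_nsmul _ _ _ fun j hj =>
      hi (j + 1) (by simpa using Finset.mem_range.mp hj)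
    rwa [Finset.card_range, smul_eq_mul] at this
  refine ⟨i, ?_⟩
  rw [hlevel, hsum, Finset.sum_range_succ']
  omega

section Counting

variable {α : Type*} [PartialOrder α] [Finite α]

theorem two_pow_ncard_le_card_lowerSet {s : Set α} (hs : IsAntichain (· ≤ ·) s) :
    2 ^ s.ncard ≤ Nat.card (LowerSet α) := by
  have hmax : ∀ t : Set s, ((↑) '' t : Set α) =
      {x | Maximal (· ∈ lowerClosure ((↑) '' t : Set α)) x} := fun t => by
    ext x
    exact ((hs.subset (Subtype.coe_image_subset s t)).maximal_mem_lowerClosure_iff_mem).symm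
  have hinj : Function.Injective fun t : Set s => lowerClosure ((↑) '' t : Set α) := by
    intro t₁ t₂ h
    apply Set.image_injective.mpr Subtype.val_injective
    simp only at h
    rw [hmax t₁, hmax t₂, h]
  have := Fintype.ofFinite s
  calc 2 ^ s.ncard = Nat.card (Set s) := by
        rw [Nat.card_eq_fintype_card, Fintype.card_set, ← Nat.card_eq_fintype_card,
          Nat.card_coe_set_eq]
    _ ≤ Nat.card (LowerSet α) := Nat.card_le_card_of_injective _ hinj

theorem card_lt_card_lowerSet : Nat.card α < Nat.card (LowerSet α) := by
  have := Fintype.ofFinite α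
  have := Fintype.ofFinite (LowerSet α)
  rw [Nat.card_eq_fintype_card, Nat.card_eq_fintype_card]
  exact Fintype.card_lt_of_injective_of_notMem _ LowerSet.Iic_injective (b := ⊥)
    fun ⟨_, hx⟩ => LowerSet.bot_lt_Iic.ne' hx

end Counting

theorem two_rpow_le_of_le_one_add_mul {a b f r : ℕ} (ha : a ≤ 1 + b * f) (hf : 2 ^ f ≤ r)
    (hr : 3 ≤ r) : (2 : ℝ) ^ (((a : ℝ) + 1) / ((b : ℝ) + 1)) ≤ (r : ℝ) + 1 := by
  -- The exponent is at most `f` only when `f ≥ 2`; for `f ≤ 1` it is at most `2` and `r ≥ 3`.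
  set e := max f 2
  have hae : a + 1 ≤ (b + 1) * e := by
    have : b * f ≤ b * e := Nat.mul_le_mul_left b (le_max_left f 2)
    have : 2 ≤ e := le_max_right f 2
    nlinarith
  have hexp : ((a : ℝ) + 1) / ((b : ℝ) + 1) ≤ e := by
    rw [div_le_iff₀ (by positivity)]
    exact_mod_cast (by linarith : a + 1 ≤ e * (b + 1))
  have h2e : 2 ^ e ≤ r + 1 := by
    rcases max_cases f 2 with ⟨h, -⟩ | ⟨h, -⟩ <;> simp only [e, h]
    · exact hf.trans r.le_succ
    · omega
  calc (2 : ℝ) ^ (((a : ℝ) + 1) / ((b : ℝ) + 1)) ≤ 2 ^ (e : ℝ) :=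
        Real.rpow_le_rpow_of_exponent_le one_le_two hexp
    _ = ((2 ^ e : ℕ) : ℝ) := by rw [Real.rpow_natCast]; push_cast; rfl
    _ ≤ (r : ℝ) + 1 := by exact_mod_cast h2e

theorem two_rpow_le_card_lowerSet_lowerSet (P : Type*) [PartialOrder P] [Finite P]
    [Nonempty P] :
    (2 : ℝ) ^ (((Nat.card (LowerSet P) : ℝ) + 1) / ((Nat.card P : ℝ) + 1)) ≤
      (Nat.card (LowerSet (LowerSet P)) : ℝ) + 1 := by
  obtain ⟨i, hi⟩ := exists_card_lowerSet_le_one_add_mul (α := P)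
  refine two_rpow_le_of_le_one_add_mul hi
    (two_pow_ncard_le_card_lowerSet (LowerSet.isAntichain_ncard_eq i)) ?_
  have := card_lt_card_lowerSet (α := P)
  have := card_lt_card_lowerSet (α := LowerSet P)
  have : 0 < Nat.card P := Nat.card_pos
  omega

/-- For every `k ≥ 4`, `q ≥ 2`, `n ≥ 2`:
`N_k(q,n) ≥ 2^{N_{k-1}(q,n)/N_{k-2}(q,n)}`. -/
theorem stmt18 (k q n : ℕ) (hk : 4 ≤ k) (hq : 2 ≤ q) (hn : 2 ≤ n) :
    (2 : ℝ) ^ ((Nk (k - 1) q n : ℝ) / (Nk (k - 2) q n : ℝ)) ≤ (Nk k q n : ℝ) := by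
  obtain ⟨m, rfl⟩ : ∃ m, k = m + 4 := ⟨k - 4, by omega⟩
  have := downsetTower.nonempty (q := q) (by omega : 0 < n) m
  rw [show m + 4 - 1 = m + 1 + 2 by omega, show m + 4 - 2 = m + 2 by omega,
    show m + 4 = m + 2 + 2 by omega, Nk_eq (m := m + 1) (by omega) (by omega),
    Nk_eq (m := m) (by omega) (by omega), Nk_eq (m := m + 2) (by omega) (by omega)]
  push_cast
  exact two_rpow_le_card_lowerSet_lowerSet (downsetTower q n m)
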